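/- Let l : 2^V → ℝ be submodular with l(∅) = 0 and l(A) ≥ 0 for all A ⊆ V. Then the Lovász hinge (general case) L2_l is a convex function on ℝ^p and is an extension of l, i.e. L2_l(1_A) = l(A) for every A ⊆ V. -/

import Mathlib

open Finset

/-- The chain {σ₁,…,σⱼ}: the image under σ of the first j indices. -/
def chainSet {p : ℕ} (σ : Equiv.Perm (Fin p)) (j : ℕ) : Finset (Fin p) :=
  (Finset.univ.filter fun k : Fin p => (k : ℕ) < j).image σ

/-- G_l(σ, s) = Σ_{j=1}^p s_{σ_j}·(l({σ₁,…,σⱼ}) − l({σ₁,…,σ_{j−1}})). -/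
def lovaszSum {p : ℕ} (l : Finset (Fin p) → ℝ) (σ : Equiv.Perm (Fin p))
    (s : Fin p → ℝ) : ℝ :=
  ∑ j : Fin p, s (σ j) * (l (chainSet σ ((j : ℕ) + 1)) - l (chainSet σ (j : ℕ)))

/-- Indicator vector 1_A ∈ {0,1}^p of A ⊆ V. -/
def indic {p : ℕ} (A : Finset (Fin p)) : Fin p → ℝ := fun i => if i ∈ A then 1 else 0

/-- A permutation sorting s in decreasing order: s_{π_1} ≥ … ≥ s_{π_p}. -/
def SortsDesc {p : ℕ} (π : Equiv.Perm (Fin p)) (s : Fin p → ℝ) : Prop :=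
  ∀ j k : Fin p, j ≤ k → s (π k) ≤ s (π j)

/-- A canonical permutation sorting s in decreasing order. -/
noncomputable def sortDesc {p : ℕ} (s : Fin p → ℝ) : Equiv.Perm (Fin p) :=
  Tuple.sort (fun i => -s i)

/-- The Lovász extension ℓ̂(s) = G_l(π, s) for a permutation π sorting s
decreasingly (independent of the choice of such π). -/
noncomputable def lovaszExt {p : ℕ} (l : Finset (Fin p) → ℝ) (s : Fin p → ℝ) : ℝ :=
  lovaszSum l (sortDesc s) s

/-- Submodularity: l(A) + l(B) ≥ l(A ∪ B) + l(A ∩ B). -/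
def Submodular {p : ℕ} (l : Finset (Fin p) → ℝ) : Prop :=
  ∀ A B : Finset (Fin p), l (A ∪ B) + l (A ∩ B) ≤ l A + l B

/-- The slack-rescaling surrogate S_l(s) = max_{I⊆V} l(I)·(1 − 2 Σ_{i∈I}(1 − s_i)). -/
noncomputable def slackSur {p : ℕ} (l : Finset (Fin p) → ℝ) (s : Fin p → ℝ) : ℝ :=
  Finset.univ.sup' Finset.univ_nonempty
    (fun I : Finset (Fin p) => l I * (1 - 2 * ∑ i ∈ I, (1 - s i)))

/-- The margin-rescaling surrogate M_l(s) = max_{I⊆V} ( l(I) − 2 Σ_{i∈I}(1 − s_i) ). -/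
noncomputable def marginSur {p : ℕ} (l : Finset (Fin p) → ℝ) (s : Fin p → ℝ) : ℝ :=
  Finset.univ.sup' Finset.univ_nonempty
    (fun I : Finset (Fin p) => l I - 2 * ∑ i ∈ I, (1 - s i))

/-- The Lovász hinge, general (non-monotonic) case. -/
noncomputable def hingeGen {p : ℕ} (l : Finset (Fin p) → ℝ) (s : Fin p → ℝ) : ℝ :=
  Finset.univ.sup' Finset.univ_nonempty
    (fun σ : Equiv.Perm (Fin p) => max 0 (lovaszSum l σ s))

/-- The Lovász hinge, increasing case (componentwise thresholding). -/
noncomputable def hingeInc {p : ℕ} (l : Finset (Fin p) → ℝ) (s : Fin p → ℝ) : ℝ :=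
  Finset.univ.sup' Finset.univ_nonempty
    (fun σ : Equiv.Perm (Fin p) =>
      ∑ j : Fin p, max (s (σ j)) 0 *
        (l (chainSet σ ((j : ℕ) + 1)) - l (chainSet σ (j : ℕ))))

/-
Each `lovaszSum l σ` is linear in `s`, so `hingeGen l`, a finite maximum of the convex functions
`max 0 (lovaszSum l σ ·)`, is convex. At an indicator `1_A`, `lovaszSum l σ (1_A)` adds up the
marginal gains `l (C ∪ {σ j}) - l C` along the chain `C = chainSet σ j` over those `σ j ∈ A`; by
submodularity each gain is at most that of adding `σ j` to `C ∩ A`, and those telescope to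
`l A - l ∅`. A permutation listing `A` first attains this bound, and `l A ≥ 0` takes care of
the `max 0`.
-/

theorem ConvexOn.finset_sup' {𝕜 E β ι : Type*} [Semiring 𝕜] [PartialOrder 𝕜]
    [AddCommMonoid E] [AddCommMonoid β] [LinearOrder β] [IsOrderedAddMonoid β] [SMul 𝕜 E]
    [Module 𝕜 β] [PosSMulStrictMono 𝕜 β] {s : Set E} {t : Finset ι} (H : t.Nonempty)
    {f : ι → E → β} (hf : ∀ i ∈ t, ConvexOn 𝕜 s (f i)) : ConvexOn 𝕜 s (t.sup' H f) := by
  induction H using Finset.Nonempty.cons_induction with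
  | singleton i => exact hf i (mem_singleton_self i)
  | cons i t hi ht ih =>
    rw [sup'_cons ht]
    exact (hf i (mem_cons_self i t)).sup (ih fun j hj => hf j (mem_cons_of_mem hj))

section Chain

variable {p : ℕ} (σ : Equiv.Perm (Fin p))

@[simp]
lemma chainSet_zero : chainSet σ 0 = ∅ := by
  simp [chainSet]

lemma chainSet_self : chainSet σ p = univ := by
  simp [chainSet, Fin.is_lt]

lemma mem_chainSet {j : ℕ} {k : Fin p} : σ k ∈ chainSet σ j ↔ (k : ℕ) < j := by
  simp [chainSet]

lemma chainSet_succ (j : Fin p) :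
    chainSet σ ((j : ℕ) + 1) = insert (σ j) (chainSet σ (j : ℕ)) := by
  ext x
  obtain ⟨k, rfl⟩ := σ.surjective x
  simp only [mem_insert, mem_chainSet, σ.injective.eq_iff, Fin.ext_iff]
  omega

lemma apply_notMem_chainSet (j : Fin p) : σ j ∉ chainSet σ (j : ℕ) := by
  simp [mem_chainSet]

lemma chainSet_mono : Monotone (chainSet σ) := fun _ _ h =>
  image_subset_image fun k => by simp only [mem_filter, mem_univ, true_and]; omega

lemma sum_chainSet_inter_sub (l : Finset (Fin p) → ℝ) (A : Finset (Fin p)) :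
    ∑ j : Fin p, (l (chainSet σ ((j : ℕ) + 1) ∩ A) - l (chainSet σ (j : ℕ) ∩ A)) = l A - l ∅ := by
  rw [Fin.sum_univ_eq_sum_range (fun j => l (chainSet σ (j + 1) ∩ A) - l (chainSet σ j ∩ A)),
    sum_range_sub (fun j => l (chainSet σ j ∩ A)), chainSet_self, chainSet_zero, univ_inter,
    empty_inter]

end Chain

lemma Submodular.insert_sub_le {p : ℕ} {l : Finset (Fin p) → ℝ} (hl : Submodular l)
    {B C : Finset (Fin p)} {x : Fin p} (hBC : B ⊆ C) (hx : x ∉ C) :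
    l (insert x C) - l C ≤ l (insert x B) - l B := by
  have hunion : C ∪ insert x B = insert x C := by
    rw [union_insert, union_eq_left.mpr hBC]
  have hinter : C ∩ insert x B = B := by
    rw [inter_insert_of_notMem hx, inter_eq_right.mpr hBC]
  have := hl C (insert x B)
  rw [hunion, hinter] at this
  linarith

section LovaszSum

variable {p : ℕ} (l : Finset (Fin p) → ℝ) (σ : Equiv.Perm (Fin p))

lemma lovaszSum_indic_le (hl : Submodular l) (A : Finset (Fin p)) :
    lovaszSum l σ (indic A) ≤ l A - l ∅ := by
  rw [← sum_chainSet_inter_sub σ l A]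
  refine sum_le_sum fun j _ => ?_
  by_cases hj : σ j ∈ A
  · have hA : chainSet σ ((j : ℕ) + 1) ∩ A = insert (σ j) (chainSet σ (j : ℕ) ∩ A) := by
      rw [chainSet_succ, insert_inter_of_mem hj]
    simpa [indic, hj, hA, chainSet_succ] using
      hl.insert_sub_le inter_subset_left (apply_notMem_chainSet σ j)
  · simp [indic, hj, chainSet_succ, insert_inter_of_notMem hj]

lemma chainSet_succ_subset_of_sortsDesc {A : Finset (Fin p)} (hσ : SortsDesc σ (indic A))
    {j : Fin p} (hj : σ j ∈ A) : chainSet σ ((j : ℕ) + 1) ⊆ A := by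
  intro x hx
  obtain ⟨k, rfl⟩ := σ.surjective x
  rw [mem_chainSet] at hx
  by_contra hk
  have := hσ k j (Fin.le_def.mpr (by omega))
  norm_num [indic, hj, hk] at this

lemma subset_chainSet_of_sortsDesc {A : Finset (Fin p)} (hσ : SortsDesc σ (indic A))
    {j : Fin p} (hj : σ j ∉ A) : A ⊆ chainSet σ (j : ℕ) := by
  intro x hx
  obtain ⟨k, rfl⟩ := σ.surjective x
  rw [mem_chainSet]
  by_contra! hk
  have := hσ j k (Fin.le_def.mpr hk)
  norm_num [indic, hj, hx] at this

lemma lovaszSum_indic_of_sortsDesc {A : Finset (Fin p)} (hσ : SortsDesc σ (indic A)) :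
    lovaszSum l σ (indic A) = l A - l ∅ := by
  rw [← sum_chainSet_inter_sub σ l A]
  refine sum_congr rfl fun j _ => ?_
  have hmono : chainSet σ (j : ℕ) ⊆ chainSet σ ((j : ℕ) + 1) := chainSet_mono σ (by omega)
  by_cases hj : σ j ∈ A
  · have hsub := chainSet_succ_subset_of_sortsDesc σ hσ hj
    rw [inter_eq_left.mpr hsub, inter_eq_left.mpr (hmono.trans hsub)]
    simp [indic, hj]
  · have hsub := subset_chainSet_of_sortsDesc σ hσ hj
    rw [inter_eq_right.mpr hsub, inter_eq_right.mpr (hsub.trans hmono)]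
    simp [indic, hj]

lemma lovaszSum_add (s t : Fin p → ℝ) :
    lovaszSum l σ (s + t) = lovaszSum l σ s + lovaszSum l σ t := by
  simp only [lovaszSum, Pi.add_apply, add_mul, sum_add_distrib]

lemma lovaszSum_smul (c : ℝ) (s : Fin p → ℝ) : lovaszSum l σ (c • s) = c * lovaszSum l σ s := by
  simp only [lovaszSum, Pi.smul_apply, smul_eq_mul, mul_sum, mul_assoc]

lemma convexOn_lovaszSum : ConvexOn ℝ Set.univ (lovaszSum l σ) :=
  LinearMap.convexOn ⟨⟨lovaszSum l σ, lovaszSum_add l σ⟩, lovaszSum_smul l σ⟩ convex_univ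

end LovaszSum

lemma sortsDesc_sortDesc {p : ℕ} (s : Fin p → ℝ) : SortsDesc (sortDesc s) s :=
  fun _ _ h => neg_le_neg_iff.mp (Tuple.monotone_sort (fun i => -s i) h)

lemma lovaszExt_indic {p : ℕ} (l : Finset (Fin p) → ℝ) (A : Finset (Fin p)) :
    lovaszExt l (indic A) = l A - l ∅ :=
  lovaszSum_indic_of_sortsDesc l _ (sortsDesc_sortDesc _)

lemma hingeGen_eq_sup' {p : ℕ} (l : Finset (Fin p) → ℝ) :
    hingeGen l = univ.sup' univ_nonempty (fun σ => (fun _ => 0) ⊔ lovaszSum l σ) := by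
  ext s
  rw [Finset.sup'_apply]
  rfl

theorem hingeGen_convex_and_extension_general (p : ℕ)
    (l : Finset (Fin p) → ℝ) (hsub : Submodular l) (h0 : l ∅ = 0)
    (hnn : ∀ A : Finset (Fin p), 0 ≤ l A) :
    ConvexOn ℝ Set.univ (hingeGen l) ∧
      ∀ A : Finset (Fin p), hingeGen l (indic A) = l A := by
  constructor
  · rw [hingeGen_eq_sup']
    exact ConvexOn.finset_sup' _ fun σ _ =>
      (convexOn_const 0 convex_univ).sup (convexOn_lovaszSum l σ)
  · intro A
    refine le_antisymm (sup'_le _ _ fun σ _ => max_le (hnn A) ?_) ?_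
    · simpa [h0] using lovaszSum_indic_le l σ hsub A
    · calc l A = max 0 (lovaszExt l (indic A)) := by simp [lovaszExt_indic, h0, hnn A]
        _ ≤ hingeGen l (indic A) :=
          le_sup' (fun σ => max 0 (lovaszSum l σ (indic A))) (mem_univ _)

/-- for submodular nonnegative l with l(∅)=0, the Lovász hinge
(general case) is convex on ℝ^p and is an extension of l. -/
theorem hingeGen_convex_and_extension (p : ℕ) (hp : 1 ≤ p)
    (l : Finset (Fin p) → ℝ) (hsub : Submodular l) (h0 : l ∅ = 0)
    (hnn : ∀ A : Finset (Fin p), 0 ≤ l A) :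
    ConvexOn ℝ Set.univ (hingeGen l) ∧
      ∀ A : Finset (Fin p), hingeGen l (indic A) = l A :=
  hingeGen_convex_and_extension_general p l hsub h0 hnn
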